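/- Fix k ≤ ⌊n/2⌋ and let P_k be the set of all partial tableaux of shape 2×k with entries in {1,…,n} (sets of k disjoint pairs from {1,…,n}). For any function τ on horizontal tableaux of shape 2×n, the double sum Σ_{ν' ∈ P_k} Σ_{μ ⊥ ν'} τ(μ) equals Σ_{a} c_a^k · Σ_{μ of type a} τ(μ), where c_a^k = (n−a)!·a!/(k!·(n−a−k)!·(a−k)!) and the outer sum ranges over types a with ⌈n/2⌉ ≤ a ≤ n−k. -/

import Mathlib

open scoped Classical
open Finset

def IsHoriz (n : ℕ) (μ : Finset (Finset (Fin (2*n)))) : Prop :=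
  μ.card = 2 ∧ (∀ r ∈ μ, r.card = n) ∧
  (μ : Set (Finset (Fin (2*n)))).PairwiseDisjoint id ∧
  μ.sup id = Finset.univ

def IsVert (n : ℕ) (ν : Finset (Finset (Fin (2*n)))) : Prop :=
  (∀ c ∈ ν, c.card = 2) ∧
  (ν : Set (Finset (Fin (2*n)))).PairwiseDisjoint id ∧
  ν.sup id = Finset.univ

def IsPartial (n k : ℕ) (ν' : Finset (Finset (Fin (2*n)))) : Prop :=
  ν'.card = k ∧ (∀ c ∈ ν', c.card = 2) ∧
  (ν' : Set (Finset (Fin (2*n)))).PairwiseDisjoint id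

def Orth (n : ℕ) (μ ν : Finset (Finset (Fin (2*n)))) : Prop :=
  ∀ r ∈ μ, ∀ c ∈ ν, (r ∩ c).card ≤ 1

def OrthP (n : ℕ) (μ ν' : Finset (Finset (Fin (2*n)))) : Prop :=
  ∃ ν, IsVert n ν ∧ ν' ⊆ ν ∧ Orth n μ ν

def firstHalf (n : ℕ) : Finset (Fin (2*n)) :=
  Finset.univ.filter (fun x => (x : ℕ) < n)

def typeOf (n : ℕ) (μ : Finset (Finset (Fin (2*n)))) : ℕ :=
  μ.sup (fun r => (r ∩ firstHalf n).card)
lemma pair_inj_aux {α : Type*} [DecidableEq α] {A B : Finset α} (hAB : Disjoint A B)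
    {x x' y y' : α} (hx : x ∈ A) (hx' : x' ∈ A) (hy : y ∈ B) (hy' : y' ∈ B)
    (h : ({x, y} : Finset α) = {x', y'}) : x = x' ∧ y = y' := by
  have h1 : x ∈ ({x', y'} : Finset α) := h ▸ (by simp)
  have h2 : y ∈ ({x', y'} : Finset α) := h ▸ (by simp)
  simp only [mem_insert, mem_singleton] at h1 h2
  have hxy' : x ≠ y' := fun he => (Finset.disjoint_left.mp hAB hx) (he ▸ hy')
  have hyx' : y ≠ x' := fun he => (Finset.disjoint_left.mp hAB (he ▸ hx')) hy
  exact ⟨h1.resolve_right hxy', h2.resolve_left hyx'⟩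

lemma fiber_count {α : Type*} [Fintype α] [DecidableEq α] (A B : Finset α) (hAB : Disjoint A B)
    (k : ℕ) (S : Finset α) (hS : S ∈ A.powersetCard k) :
    ((univ.filter (fun ν' : Finset (Finset α) => ν'.card = k ∧
        (ν' : Set (Finset α)).PairwiseDisjoint id ∧
        ∀ c ∈ ν', (c ∩ A).card = 1 ∧ (c ∩ B).card = 1 ∧ c ⊆ A ∪ B)).filter
      (fun ν' => ν'.biUnion id ∩ A = S)).card = B.card.descFactorial k := by
  rw [mem_powersetCard] at hS
  obtain ⟨hSA, hScard⟩ := hS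
  have key : (Finset.univ : Finset ((S : Finset α) ↪ B)).card =
      ((univ.filter (fun ν' : Finset (Finset α) => ν'.card = k ∧
        (ν' : Set (Finset α)).PairwiseDisjoint id ∧
        ∀ c ∈ ν', (c ∩ A).card = 1 ∧ (c ∩ B).card = 1 ∧ c ⊆ A ∪ B)).filter
      (fun ν' => ν'.biUnion id ∩ A = S)).card := by
    apply Finset.card_bij (fun (f : (S : Finset α) ↪ B) _ =>
      S.attach.image (fun x => ({↑x, ↑(f x)} : Finset α)))
    · -- maps to
      intro f _
      have himg_inj : ∀ x ∈ S.attach, ∀ y ∈ S.attach,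
          ({↑x, ↑(f x)} : Finset α) = {↑y, ↑(f y)} → x = y := by
        intro x _ y _ h
        have := pair_inj_aux hAB (hSA x.2) (hSA y.2) (f x).2 (f y).2 h
        exact Subtype.ext this.1
      have hcard : (S.attach.image (fun x => ({↑x, ↑(f x)} : Finset α))).card = k := by
        rw [Finset.card_image_of_injOn himg_inj, Finset.card_attach, hScard]
      have hmem : ∀ c ∈ S.attach.image (fun x => ({↑x, ↑(f x)} : Finset α)),
          ∃ x : (S : Finset α), c = {↑x, ↑(f x)} := by
        intro c hc
        obtain ⟨x, _, hx⟩ := Finset.mem_image.mp hc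
        exact ⟨x, hx.symm⟩
      simp only [mem_filter, mem_univ, true_and]
      have pairA : ∀ x : (S : Finset α), (({↑x, ↑(f x)} : Finset α) ∩ A) = {↑x} := by
        intro x
        ext z
        simp only [mem_inter, mem_insert, mem_singleton]
        constructor
        · rintro ⟨(rfl | rfl), hz⟩
          · rfl
          · exact absurd hz (Finset.disjoint_right.mp hAB (f x).2)
        · rintro rfl; exact ⟨Or.inl rfl, hSA x.2⟩
      have pairB : ∀ x : (S : Finset α), (({↑x, ↑(f x)} : Finset α) ∩ B) = {↑(f x)} := by
        intro x
        ext z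
        simp only [mem_inter, mem_insert, mem_singleton]
        constructor
        · rintro ⟨(rfl | rfl), hz⟩
          · exact absurd hz (Finset.disjoint_left.mp hAB (hSA x.2))
          · rfl
        · rintro rfl; exact ⟨Or.inr rfl, (f x).2⟩
      refine ⟨⟨hcard, ?_, ?_⟩, ?_⟩
      · -- pairwise disjoint
        intro c hc d hd hcd
        simp only [Finset.coe_image, Set.mem_image] at hc hd
        obtain ⟨x, _, rfl⟩ := hc
        obtain ⟨y, _, rfl⟩ := hd
        rw [Function.onFun, id, id, Finset.disjoint_left]
        intro z hz hz'
        simp only [mem_insert, mem_singleton, Finset.mem_coe] at hz hz'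
        have hxy : x ≠ y := fun he => hcd (by rw [he])
        have hfxy : (f x : α) ≠ (f y : α) := fun he => hxy (f.injective (Subtype.ext he))
        have hxyc : (x : α) ≠ (y : α) := fun he => hxy (Subtype.ext he)
        rcases hz with rfl | rfl <;> rcases hz' with h | h
        · exact hxyc h
        · exact (Finset.disjoint_left.mp hAB (hSA x.2)) (h.symm ▸ (f y).2)
        · exact (Finset.disjoint_left.mp hAB (hSA y.2)) (h ▸ (f x).2)
        · exact hfxy h
      · intro c hc
        obtain ⟨x, rfl⟩ := hmem c hc
        refine ⟨by rw [pairA, Finset.card_singleton], by rw [pairB, Finset.card_singleton], ?_⟩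
        intro z hz
        simp only [mem_insert, mem_singleton] at hz
        rcases hz with rfl | rfl
        · exact Finset.mem_union_left _ (hSA x.2)
        · exact Finset.mem_union_right _ (f x).2
      · -- biUnion ∩ A = S
        ext z
        simp only [mem_inter, Finset.mem_biUnion, id]
        constructor
        · rintro ⟨⟨c, hc, hzc⟩, hzA⟩
          obtain ⟨x, rfl⟩ := hmem c hc
          simp only [mem_insert, mem_singleton] at hzc
          rcases hzc with rfl | rfl
          · exact x.2
          · exact absurd hzA (Finset.disjoint_right.mp hAB (f x).2)
        · intro hz
          exact ⟨⟨{↑(⟨z, hz⟩ : (S : Finset α)), ↑(f ⟨z, hz⟩)},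
            Finset.mem_image_of_mem _ (Finset.mem_attach _ _), by simp⟩, hSA hz⟩
    · -- injective
      intro f _ g _ h
      ext x
      have hx : ({↑x, ↑(f x)} : Finset α) ∈ S.attach.image (fun y => ({↑y, ↑(g y)} : Finset α)) := by
        rw [← h]; exact Finset.mem_image_of_mem _ (Finset.mem_attach _ _)
      obtain ⟨y, _, hy⟩ := Finset.mem_image.mp hx
      have := pair_inj_aux hAB (hSA y.2) (hSA x.2) (g y).2 (f x).2 hy
      rw [← this.2, Subtype.ext this.1]
    · -- surjective
      intro ν' hν'
      simp only [mem_filter, mem_univ, true_and] at hν'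
      obtain ⟨⟨hcard, hdisj, hcols⟩, hbiU⟩ := hν'
      -- for each x in S, choose the column containing x
      have hex : ∀ x : (S : Finset α), ∃ c, c ∈ ν' ∧ (x : α) ∈ c := by
        intro x
        have : (x : α) ∈ ν'.biUnion id ∩ A := hbiU ▸ x.2
        obtain ⟨c, hc, hxc⟩ := Finset.mem_biUnion.mp (Finset.mem_inter.mp this).1
        exact ⟨c, hc, hxc⟩
      choose col hcol hxcol using hex
      have hexB : ∀ x : (S : Finset α), ∃ y, col x ∩ B = {y} :=
        fun x => Finset.card_eq_one.mp (hcols _ (hcol x)).2.1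
      choose part hpart using hexB
      have hpartB : ∀ x, part x ∈ B := by
        intro x
        have : part x ∈ col x ∩ B := (hpart x) ▸ Finset.mem_singleton_self _
        exact (Finset.mem_inter.mp this).2
      -- col x = {x, part x}
      have hcolA : ∀ x : (S : Finset α), col x ∩ A = {(x : α)} := by
        intro x
        have h1 := (hcols _ (hcol x)).1
        have hxm : (x : α) ∈ col x ∩ A := Finset.mem_inter.mpr ⟨hxcol x, hSA x.2⟩
        exact (Finset.eq_singleton_iff_unique_mem.mpr ⟨hxm, fun y hy => by
          exact Finset.card_le_one.mp (le_of_eq h1) y hy _ hxm⟩)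
      have hcoleq : ∀ x : (S : Finset α), col x = {(x : α), part x} := by
        intro x
        have hsub := (hcols _ (hcol x)).2.2
        ext z
        constructor
        · intro hz
          rcases Finset.mem_union.mp (hsub hz) with h | h
          · have : z ∈ col x ∩ A := Finset.mem_inter.mpr ⟨hz, h⟩
            rw [hcolA x] at this
            simp only [mem_singleton] at this
            simp [this]
          · have : z ∈ col x ∩ B := Finset.mem_inter.mpr ⟨hz, h⟩
            rw [hpart x] at this
            simp only [mem_singleton] at this
            simp [this]
        · intro hz
          simp only [mem_insert, mem_singleton] at hz
          rcases hz with rfl | rfl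
          · exact hxcol x
          · have : part x ∈ col x ∩ B := (hpart x) ▸ Finset.mem_singleton_self _
            exact (Finset.mem_inter.mp this).1
      -- uniqueness of column through a point
      have hcol_unique : ∀ x y : (S : Finset α), ∀ z, z ∈ col x → z ∈ col y → col x = col y := by
        intro x y z hzx hzy
        by_contra hne
        have := hdisj (hcol x) (hcol y) hne
        simp only [Function.onFun, id] at this
        rw [Finset.disjoint_left] at this
        exact absurd hzy (this hzx)
      have hinj : Function.Injective (fun x : (S : Finset α) => (⟨part x, hpartB x⟩ : (B : Finset α))) := by
        intro x y h
        simp only [Subtype.mk.injEq] at h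
        have hpx : part x ∈ col x := by
          have : part x ∈ col x ∩ B := (hpart x) ▸ Finset.mem_singleton_self _
          exact (Finset.mem_inter.mp this).1
        have hpy : part x ∈ col y := by
          have : part y ∈ col y ∩ B := (hpart y) ▸ Finset.mem_singleton_self _
          exact h ▸ (Finset.mem_inter.mp this).1
        have hcc := hcol_unique x y _ hpx hpy
        have : (x : α) ∈ col y ∩ A := Finset.mem_inter.mpr ⟨hcc ▸ hxcol x, hSA x.2⟩
        rw [hcolA y] at this
        simp only [mem_singleton] at this
        exact Subtype.ext this
      refine ⟨⟨fun x => ⟨part x, hpartB x⟩, hinj⟩, mem_univ _, ?_⟩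
      -- image = ν'
      have hsub : S.attach.image (fun x : {t // t ∈ S} => ({(x : α), part x} : Finset α)) ⊆ ν' := by
        intro c hc
        obtain ⟨x, _, rfl⟩ := Finset.mem_image.mp hc
        exact (hcoleq x) ▸ hcol x
      have himg_inj : ∀ x ∈ S.attach, ∀ y ∈ S.attach,
          ({(x : α), part x} : Finset α) = ({(y : α), part y} : Finset α) → x = y := by
        intro x _ y _ h
        exact Subtype.ext (pair_inj_aux hAB (hSA x.2) (hSA y.2) (hpartB x) (hpartB y) h).1
      have hcard2 : (S.attach.image (fun x : {t // t ∈ S} => ({(x : α), part x} : Finset α))).card = k := by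
        rw [Finset.card_image_of_injOn himg_inj, Finset.card_attach, hScard]
      show S.attach.image (fun x : {t // t ∈ S} => ({(x : α), part x} : Finset α)) = ν'
      exact Finset.eq_of_subset_of_card_le hsub (by rw [hcard, hcard2])
  rw [← key, Finset.card_univ, Fintype.card_embedding_eq, Fintype.card_coe, Fintype.card_coe, hScard]

lemma matching_count {α : Type*} [Fintype α] [DecidableEq α] (A B : Finset α) (hAB : Disjoint A B)
    (k : ℕ) :
    (univ.filter (fun ν' : Finset (Finset α) => ν'.card = k ∧
        (ν' : Set (Finset α)).PairwiseDisjoint id ∧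
        ∀ c ∈ ν', (c ∩ A).card = 1 ∧ (c ∩ B).card = 1 ∧ c ⊆ A ∪ B)).card
      = A.card.choose k * B.card.descFactorial k := by
  rw [Finset.card_eq_sum_card_fiberwise (f := fun ν' => ν'.biUnion id ∩ A)
    (t := A.powersetCard k) ?_]
  · rw [Finset.sum_congr rfl (fun S hS => fiber_count A B hAB k S hS),
      Finset.sum_const, Finset.card_powersetCard, smul_eq_mul]
  · intro ν' hν'
    simp only [Finset.mem_coe, mem_filter, mem_univ, true_and] at hν' ⊢
    obtain ⟨hcard, hdisj, hcols⟩ := hν'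
    rw [mem_powersetCard]
    refine ⟨Finset.inter_subset_right, ?_⟩
    have hrw : ν'.biUnion id ∩ A = ν'.biUnion (fun c => c ∩ A) := by
      ext z
      simp only [mem_inter, Finset.mem_biUnion, id]
      constructor
      · rintro ⟨⟨c, hc, hzc⟩, hzA⟩; exact ⟨c, hc, hzc, hzA⟩
      · rintro ⟨c, hc, hzc, hzA⟩; exact ⟨⟨c, hc, hzc⟩, hzA⟩
    rw [hrw, Finset.card_biUnion (fun c hc d hd hcd => ?_)]
    · calc ∑ c ∈ ν', (c ∩ A).card = ∑ c ∈ ν', 1 :=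
            Finset.sum_congr rfl (fun c hc => (hcols c hc).1)
        _ = k := by rw [Finset.sum_const, smul_eq_mul, mul_one, hcard]
    · have := hdisj hc hd hcd
      simp only [Function.onFun, id] at this
      exact this.mono Finset.inter_subset_left Finset.inter_subset_left

lemma firstHalf_card (n : ℕ) : (firstHalf n).card = n := by
  have h : firstHalf n = Finset.univ.map
      ⟨Fin.castLE (by omega : n ≤ 2*n), Fin.castLE_injective _⟩ := by
    ext x
    simp only [firstHalf, mem_filter, mem_univ, true_and, Finset.mem_map,
      Function.Embedding.coeFn_mk]
    constructor
    · intro hx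
      exact ⟨⟨(x : ℕ), hx⟩, Fin.ext rfl⟩
    · rintro ⟨y, rfl⟩
      exact y.2
  rw [h, Finset.card_map, Finset.card_univ, Fintype.card_fin]

lemma horiz_structure (n : ℕ) (μ : Finset (Finset (Fin (2*n)))) (hμ : IsHoriz n μ) :
    ∃ r₁ r₂ : Finset (Fin (2*n)), r₁ ≠ r₂ ∧ μ = {r₁, r₂} ∧ Disjoint r₁ r₂ ∧
      r₁ ∪ r₂ = Finset.univ ∧
      Disjoint (r₁ ∩ firstHalf n) (r₂ ∩ firstHalf n) ∧
      (r₁ ∩ firstHalf n) ∪ (r₂ ∩ firstHalf n) = firstHalf n ∧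
      (r₁ ∩ firstHalf n).card + (r₂ ∩ firstHalf n).card = n ∧
      typeOf n μ = max (r₁ ∩ firstHalf n).card (r₂ ∩ firstHalf n).card := by
  obtain ⟨r₁, r₂, hne, rfl⟩ := Finset.card_eq_two.mp hμ.1
  obtain ⟨-, hcards, hdisj, hsup⟩ := hμ
  have hd : Disjoint r₁ r₂ := by
    have := hdisj (by simp) (by simp) hne
    simpa [Function.onFun] using this
  have hu : r₁ ∪ r₂ = Finset.univ := by
    rw [← hsup]; simp [Finset.sup_insert, Finset.sup_singleton]
  have hdAB : Disjoint (r₁ ∩ firstHalf n) (r₂ ∩ firstHalf n) :=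
    hd.mono Finset.inter_subset_left Finset.inter_subset_left
  have huAB : (r₁ ∩ firstHalf n) ∪ (r₂ ∩ firstHalf n) = firstHalf n := by
    rw [← Finset.union_inter_distrib_right, hu, Finset.univ_inter]
  have hcAB : (r₁ ∩ firstHalf n).card + (r₂ ∩ firstHalf n).card = n := by
    rw [← Finset.card_union_of_disjoint hdAB, huAB, firstHalf_card]
  refine ⟨r₁, r₂, hne, rfl, hd, hu, hdAB, huAB, hcAB, ?_⟩
  rw [typeOf]
  rw [Finset.sup_insert, Finset.sup_singleton]

lemma choose_desc_symm (a b k : ℕ) :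
    a.choose k * b.descFactorial k = b.choose k * a.descFactorial k := by
  rw [Nat.descFactorial_eq_factorial_mul_choose, Nat.descFactorial_eq_factorial_mul_choose]
  ring

lemma horiz_count (n k : ℕ) (μ : Finset (Finset (Fin (2*n)))) (hμ : IsHoriz n μ) :
    (univ.filter (fun ν' => (IsPartial n k ν' ∧ ∀ c ∈ ν', c ⊆ firstHalf n) ∧ Orth n μ ν')).card
    = (typeOf n μ).choose k * (n - typeOf n μ).descFactorial k := by
  obtain ⟨r₁, r₂, hne, hμeq, hd, hu, hdAB, huAB, hcAB, htype⟩ := horiz_structure n μ hμ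
  have hr₁ : r₁ ∈ μ := by rw [hμeq]; simp
  have hr₂ : r₂ ∈ μ := by rw [hμeq]; simp
  set A := r₁ ∩ firstHalf n with hA
  set B := r₂ ∩ firstHalf n with hB
  have hfil : univ.filter
      (fun ν' : Finset (Finset (Fin (2*n))) =>
        (IsPartial n k ν' ∧ ∀ c ∈ ν', c ⊆ firstHalf n) ∧ Orth n μ ν')
      = univ.filter (fun ν' : Finset (Finset (Fin (2*n))) => ν'.card = k ∧
        (ν' : Set (Finset (Fin (2*n)))).PairwiseDisjoint id ∧
        ∀ c ∈ ν', (c ∩ A).card = 1 ∧ (c ∩ B).card = 1 ∧ c ⊆ A ∪ B) := by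
    apply Finset.filter_congr
    intro ν' _
    constructor
    · rintro ⟨⟨⟨hcard, hc2, hpd⟩, hsubF⟩, horth⟩
      refine ⟨hcard, hpd, fun c hc => ?_⟩
      have hcF : c ⊆ firstHalf n := hsubF c hc
      have hcA : c ∩ A = c ∩ r₁ := by
        ext z
        simp only [hA, Finset.mem_inter]
        exact ⟨fun h => ⟨h.1, h.2.1⟩, fun h => ⟨h.1, h.2, by
          have := hcF h.1; simpa [firstHalf] using this⟩⟩
      have hcB : c ∩ B = c ∩ r₂ := by
        ext z
        simp only [hB, Finset.mem_inter]
        exact ⟨fun h => ⟨h.1, h.2.1⟩, fun h => ⟨h.1, h.2, by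
          have := hcF h.1; simpa [firstHalf] using this⟩⟩
      have h1 : (c ∩ A).card ≤ 1 := by rw [hcA, Finset.inter_comm]; exact horth r₁ hr₁ c hc
      have h2 : (c ∩ B).card ≤ 1 := by rw [hcB, Finset.inter_comm]; exact horth r₂ hr₂ c hc
      have hsplit : (c ∩ A) ∪ (c ∩ B) = c := by
        rw [← Finset.inter_union_distrib_left, huAB]
        exact Finset.inter_eq_left.mpr hcF
      have hdsp : Disjoint (c ∩ A) (c ∩ B) :=
        hdAB.mono Finset.inter_subset_right Finset.inter_subset_right
      have hsum : (c ∩ A).card + (c ∩ B).card = 2 := by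
        rw [← Finset.card_union_of_disjoint hdsp, hsplit]
        exact hc2 c hc
      refine ⟨by omega, by omega, ?_⟩
      rw [huAB]
      exact hcF
    · rintro ⟨hcard, hpd, hcols⟩
      have hc2 : ∀ c ∈ ν', c.card = 2 := by
        intro c hc
        obtain ⟨h1, h2, h3⟩ := hcols c hc
        have hsplit : (c ∩ A) ∪ (c ∩ B) = c := by
          rw [← Finset.inter_union_distrib_left, huAB]
          rw [huAB] at h3
          exact Finset.inter_eq_left.mpr h3
        have hdsp : Disjoint (c ∩ A) (c ∩ B) :=
          hdAB.mono Finset.inter_subset_right Finset.inter_subset_right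
        rw [← hsplit, Finset.card_union_of_disjoint hdsp, h1, h2]
      have hsubF : ∀ c ∈ ν', c ⊆ firstHalf n := by
        intro c hc
        rw [← huAB]
        exact (hcols c hc).2.2
      refine ⟨⟨⟨hcard, hc2, hpd⟩, hsubF⟩, ?_⟩
      intro r hr c hc
      have hcF := hsubF c hc
      have hcA : c ∩ A = c ∩ r₁ := by
        ext z
        simp only [hA, Finset.mem_inter]
        exact ⟨fun h => ⟨h.1, h.2.1⟩, fun h => ⟨h.1, h.2, by
          have := hcF h.1; simpa [firstHalf] using this⟩⟩
      have hcB : c ∩ B = c ∩ r₂ := by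
        ext z
        simp only [hB, Finset.mem_inter]
        exact ⟨fun h => ⟨h.1, h.2.1⟩, fun h => ⟨h.1, h.2, by
          have := hcF h.1; simpa [firstHalf] using this⟩⟩
      rw [hμeq, Finset.mem_insert, Finset.mem_singleton] at hr
      rcases hr with rfl | rfl
      · rw [Finset.inter_comm, ← hcA, (hcols c hc).1]
      · rw [Finset.inter_comm, ← hcB, (hcols c hc).2.1]
  rw [hfil, matching_count A B hdAB k]
  rcases Nat.le_or_le A.card B.card with h | h
  · rw [htype, max_eq_right h, show n - B.card = A.card by omega]
    exact choose_desc_symm _ _ _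
  · rw [htype, max_eq_left h, show n - A.card = B.card by omega]

lemma type_bounds (n : ℕ) (μ : Finset (Finset (Fin (2*n)))) (hμ : IsHoriz n μ) :
    (n + 1) / 2 ≤ typeOf n μ ∧ typeOf n μ ≤ n := by
  obtain ⟨r₁, r₂, -, -, -, -, -, -, hcAB, htype⟩ := horiz_structure n μ hμ
  rw [htype]
  omega

lemma coeff_eq (n k a : ℕ) (hk : k ≤ n / 2) (ha1 : (n + 1) / 2 ≤ a) (ha2 : a ≤ n - k) :
    (((n - a).factorial * a.factorial : ℚ) /
        ((k.factorial : ℚ) * (n - a - k).factorial * (a - k).factorial))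
      = ((a.choose k * (n - a).descFactorial k : ℕ) : ℚ) := by
  have hk_le_a : k ≤ a := by omega
  have hk_le_na : k ≤ n - a := by omega
  have e1 : a.choose k * k.factorial * (a - k).factorial = a.factorial :=
    Nat.choose_mul_factorial_mul_factorial hk_le_a
  have e2 : (n - a - k).factorial * (n - a).descFactorial k = (n - a).factorial :=
    Nat.factorial_mul_descFactorial hk_le_na
  rw [div_eq_iff (by positivity)]
  push_cast [← e1, ← e2]
  ring

theorem stmt11 (n k : ℕ) (hk : k ≤ n / 2) (τ : Finset (Finset (Fin (2*n))) → ℚ) :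
    ∑ ν' ∈ Finset.univ.filter
        (fun ν' => IsPartial n k ν' ∧ ∀ c ∈ ν', c ⊆ firstHalf n),
      ∑ μ ∈ Finset.univ.filter (fun μ => IsHoriz n μ ∧ Orth n μ ν'), τ μ
    = ∑ a ∈ Finset.Icc ((n + 1) / 2) (n - k),
        (((n - a).factorial * a.factorial : ℚ) /
          ((k.factorial : ℚ) * (n - a - k).factorial * (a - k).factorial)) *
        ∑ μ ∈ Finset.univ.filter (fun μ => IsHoriz n μ ∧ typeOf n μ = a), τ μ := by
  set H := univ.filter (fun μ : Finset (Finset (Fin (2*n))) => IsHoriz n μ) with hH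
  set P := univ.filter
      (fun ν' : Finset (Finset (Fin (2*n))) =>
        IsPartial n k ν' ∧ ∀ c ∈ ν', c ⊆ firstHalf n) with hP
  set g : Finset (Finset (Fin (2*n))) → ℚ :=
    fun μ => (((typeOf n μ).choose k * (n - typeOf n μ).descFactorial k : ℕ) : ℚ) * τ μ with hg
  have hHmem : ∀ μ ∈ H, IsHoriz n μ := fun μ hμ => (Finset.mem_filter.mp hμ).2
  -- Step 1: LHS = ∑ μ ∈ H, g μ
  have step1 : ∑ ν' ∈ P, ∑ μ ∈ univ.filter (fun μ => IsHoriz n μ ∧ Orth n μ ν'), τ μ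
      = ∑ μ ∈ H, g μ := by
    have e1 : ∀ ν' : Finset (Finset (Fin (2*n))),
        ∑ μ ∈ univ.filter (fun μ => IsHoriz n μ ∧ Orth n μ ν'), τ μ
        = ∑ μ ∈ H, if Orth n μ ν' then τ μ else 0 := by
      intro ν'
      rw [hH, ← Finset.filter_filter, Finset.sum_filter]
    rw [Finset.sum_congr rfl (fun ν' _ => e1 ν'), Finset.sum_comm]
    apply Finset.sum_congr rfl
    intro μ hμ
    rw [← Finset.sum_filter]
    rw [Finset.sum_const]
    have hcnt : (P.filter (fun ν' => Orth n μ ν')).card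
        = (typeOf n μ).choose k * (n - typeOf n μ).descFactorial k := by
      rw [hP, Finset.filter_filter]
      exact horiz_count n k μ (hHmem μ hμ)
    rw [hcnt, hg, nsmul_eq_mul]
  rw [step1]
  -- Step 2: RHS rewriting
  have e2 : ∀ a ∈ Finset.Icc ((n + 1) / 2) (n - k),
      (((n - a).factorial * a.factorial : ℚ) /
        ((k.factorial : ℚ) * (n - a - k).factorial * (a - k).factorial)) *
        ∑ μ ∈ univ.filter (fun μ => IsHoriz n μ ∧ typeOf n μ = a), τ μ
      = ∑ μ ∈ H.filter (fun μ => typeOf n μ = a), g μ := by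
    intro a ha
    rw [Finset.mem_Icc] at ha
    rw [show univ.filter (fun μ : Finset (Finset (Fin (2*n))) => IsHoriz n μ ∧ typeOf n μ = a)
        = H.filter (fun μ => typeOf n μ = a) by rw [hH, Finset.filter_filter]]
    rw [Finset.mul_sum]
    apply Finset.sum_congr rfl
    intro μ hμ
    have hta : typeOf n μ = a := (Finset.mem_filter.mp hμ).2
    simp only [hg]
    rw [hta, coeff_eq n k a hk ha.1 ha.2]
  rw [Finset.sum_congr rfl e2]
  -- Step 3: fiberwise
  set H' := H.filter (fun μ => typeOf n μ ≤ n - k) with hH'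
  have e3 : ∀ a ∈ Finset.Icc ((n + 1) / 2) (n - k),
      ∑ μ ∈ H.filter (fun μ => typeOf n μ = a), g μ
      = ∑ μ ∈ H'.filter (fun μ => typeOf n μ = a), g μ := by
    intro a ha
    rw [Finset.mem_Icc] at ha
    congr 1
    ext μ
    simp only [hH', Finset.mem_filter]
    constructor
    · rintro ⟨h1, h2⟩; exact ⟨⟨h1, h2 ▸ ha.2⟩, h2⟩
    · rintro ⟨⟨h1, -⟩, h2⟩; exact ⟨h1, h2⟩
  rw [Finset.sum_congr rfl e3]
  rw [Finset.sum_fiberwise_of_maps_to (g := fun μ => typeOf n μ) ?_ g]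
  · -- ∑ μ ∈ H', g μ = ∑ μ ∈ H, g μ : the rest vanishes
    rw [← Finset.sum_filter_add_sum_filter_not H (fun μ => typeOf n μ ≤ n - k) g, ← hH']
    have : ∑ μ ∈ H.filter (fun μ => ¬ typeOf n μ ≤ n - k), g μ = 0 := by
      apply Finset.sum_eq_zero
      intro μ hμ
      rw [Finset.mem_filter] at hμ
      obtain ⟨h1, h2⟩ := type_bounds n μ (hHmem μ hμ.1)
      have : n - typeOf n μ < k := by omega
      rw [hg]
      simp only [Nat.descFactorial_eq_zero_iff_lt.mpr this, Nat.mul_zero, Nat.cast_zero,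
        zero_mul]
    rw [this, add_zero]
  · intro μ hμ
    rw [hH', Finset.mem_filter] at hμ
    rw [Finset.mem_Icc]
    exact ⟨(type_bounds n μ (hHmem μ hμ.1)).1, hμ.2⟩
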